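/- arXiv:1705.09255 — 6 statements merged into one kernel-verified Lean document; each statement's English description precedes it below -/
import Mathlib

section
/- Under hypotheses (i) and (ii) below, every point of ℂ × ℂ other than the origin is a regular point of p viewed as a map ℝ⁴ → ℝ²: for every (u,v) ≠ (0,0), the real Fréchet derivative fderiv ℝ p (u,v) : ℂ × ℂ → ℂ is a surjective ℝ-linear map. Hence the origin is an isolated singular point of p. -/
/-!
Away from `v = 0`, `p(u, v) = r ^ s G(u / r, θ)` with `r = ‖v‖ ^ c` and `θ` any local smooth
branch of `arg v`: the shift `t ↦ t + 2π` permutes the strands, so `G(w, ·)` is `2π`-periodic.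
At `v = 0` each perturbation `‖v‖ ^ c γ_j(arg v)` is `O(‖v‖ ^ c)` with `c > 1`, so `p` is
differentiable everywhere, and `∂_u p(u, 0) = s u ^ (s - 1)`.

At `v ≠ 0`, with `w = u / r`, either `∂_w G(w, θ) ≠ 0` and the `u`-direction alone is onto, or
`G(w, θ) ≠ 0` because disjoint strands make all roots of `G(·, θ)` simple. In the latter case the
weighted scaling `(e^{cτ} u, e^τ v)`, which multiplies `p` by `e^{csτ}`, and the rotation
`(u, e^{iθ} v)` give the derivative the values `c s r ^ s G` and `r ^ s ∂_θ G`. Their ratio is not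
real by the absence of argument-critical points, so they span `ℂ` over `ℝ`.
-/

open Complex Finset Filter Topology Asymptotics

theorem Asymptotics.IsBigO.hasFDerivAt_of_one_lt_rpow {𝕜 E F : Type*} [NontriviallyNormedField 𝕜]
    [NormedAddCommGroup E] [NormedSpace 𝕜 E] [NormedAddCommGroup F] [NormedSpace 𝕜 F]
    {f : E → F} {x₀ : E} {c : ℝ} (h : f =O[𝓝 x₀] fun x => ‖x - x₀‖ ^ c) (hc : 1 < c) :
    HasFDerivAt f (0 : E →L[𝕜] F) x₀ := by
  have hf₀ : f x₀ = 0 :=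
    (h.eq_zero_imp.self_of_nhds) (by simp [Real.zero_rpow (by linarith : c ≠ 0)])
  have hsmall : (fun x => ‖x - x₀‖ ^ c) =o[𝓝 x₀] fun x => x - x₀ := by
    have hsplit : (fun x => ‖x - x₀‖ ^ c) = fun x => ‖x - x₀‖ ^ (c - 1) * ‖x - x₀‖ := by
      funext x
      rw [← Real.rpow_add_one' (norm_nonneg _) (by linarith), sub_add_cancel]
    have hlim : Tendsto (fun x => ‖x - x₀‖ ^ (c - 1)) (𝓝 x₀) (𝓝 0) := by
      have : ContinuousAt (fun x => ‖x - x₀‖ ^ (c - 1)) x₀ := by fun_prop (disch := linarith)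
      simpa [Real.zero_rpow (by linarith : c - 1 ≠ 0)] using this.tendsto
    rw [hsplit, ← isLittleO_norm_right]
    simpa using ((isLittleO_one_iff ℝ).2 hlim).mul_isBigO (isBigO_refl (fun x => ‖x - x₀‖) _)
  exact .of_isLittleO (by simpa [hf₀] using h.trans_isLittleO hsmall)

theorem hasFDerivAt_rpow_smul_comp_arg_zero {c : ℝ} (hc : 1 < c) {f : ℝ → ℂ} (hf : Continuous f) :
    HasFDerivAt (fun v : ℂ => ‖v‖ ^ c • f (arg v)) (0 : ℂ →L[ℝ] ℂ) 0 := by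
  obtain ⟨M, hM⟩ := isCompact_Icc.exists_bound_of_continuousOn
    (hf.continuousOn (s := Set.Icc (-Real.pi) Real.pi))
  refine IsBigO.hasFDerivAt_of_one_lt_rpow (.of_bound M (.of_forall fun v => ?_)) hc
  rw [norm_smul, sub_zero, mul_comm]
  exact mul_le_mul_of_nonneg_right (hM _ ⟨(neg_pi_lt_arg v).le, arg_le_pi v⟩) (by positivity)

theorem differentiableAt_arg {z : ℂ} (hz : z ∈ slitPlane) : DifferentiableAt ℝ arg z := by
  have : arg = fun z => (log z).im := funext fun z => (log_im z).symm
  rw [this]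
  exact imCLM.differentiableAt.comp z ((differentiableAt_log hz).restrictScalars ℝ)

theorem exists_differentiableAt_lift_arg {v₀ : ℂ} (hv₀ : v₀ ≠ 0) :
    ∃ θ : ℂ → ℝ, DifferentiableAt ℝ θ v₀ ∧ ∀ᶠ v in 𝓝 v₀, (θ v : Real.Angle) = arg v := by
  refine ⟨fun v => arg (v₀⁻¹ * v) + arg v₀, ?_, ?_⟩
  · have h1 : v₀⁻¹ * v₀ ∈ slitPlane := by simp [hv₀]
    exact ((differentiableAt_arg h1).comp v₀ ((differentiableAt_id).const_mul _)).add_const _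
  · filter_upwards [isOpen_ne.mem_nhds hv₀] with v hv
    rw [Real.Angle.coe_add, ← arg_mul_coe_angle (by simp [hv, hv₀]) hv₀, mul_comm,
      mul_inv_cancel_left₀ hv₀]

theorem deriv_prod_sub_ne_zero_of_eq_zero {𝕜 ι : Type*} [NontriviallyNormedField 𝕜] [Fintype ι]
    {z : ι → 𝕜} (hz : Function.Injective z) {w : 𝕜} (hw : ∏ i, (w - z i) = 0) :
    deriv (fun w => ∏ i, (w - z i)) w ≠ 0 := by
  classical
  obtain ⟨i₀, -, hi₀⟩ := prod_eq_zero_iff.1 hw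
  have hderiv := HasDerivAt.fun_finsetProd (u := univ) (x := w) (f := fun i w => w - z i)
    fun i _ => (hasDerivAt_id w).sub_const (z i)
  rw [hderiv.deriv, sum_eq_single i₀]
  · simp only [smul_eq_mul, mul_one]
    refine prod_ne_zero_iff.2 fun i hi => sub_ne_zero.2 fun h => (ne_of_mem_erase hi) (hz ?_)
    rw [← h, sub_eq_zero.1 hi₀]
  · intro i _ hi
    simp [prod_eq_zero (f := fun j => w - z j) (mem_erase.2 ⟨Ne.symm hi, mem_univ i₀⟩) hi₀]
  · simp

theorem LinearMap.surjective_of_im_div_ne_zero {V : Type*} [AddCommGroup V] [Module ℝ V]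
    (L : V →ₗ[ℝ] ℂ) {x y : V} (h : (L y / L x).im ≠ 0) : Function.Surjective L := by
  have hx : L x ≠ 0 := fun hx => h (by simp [hx])
  intro w
  set ζ := L y / L x
  set m := w / L x
  set β := m.im / ζ.im
  refine ⟨(m.re - β * ζ.re) • x + β • y, ?_⟩
  have hm : ((m.re - β * ζ.re : ℝ) : ℂ) + β * ζ = m := by
    apply Complex.ext <;> simp [β]; field_simp
  rw [map_add, map_smul, map_smul, real_smul, real_smul,
    show L y = ζ * L x by simp [ζ, hx], ← mul_assoc, ← add_mul, hm, div_mul_cancel₀ w hx]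

theorem surjective_fderiv_of_hasDerivAt_fst {E : Type*} [NormedAddCommGroup E] [NormedSpace ℝ E]
    {f : ℂ × E → ℂ} {u a : ℂ} {v : E} (hf : DifferentiableAt ℝ f (u, v))
    (ha : HasDerivAt (fun w => f (w, v)) a u) (ha₀ : a ≠ 0) :
    Function.Surjective (fderiv ℝ f (u, v)) := by
  have hpartial := (hf.hasFDerivAt.comp u (hasFDerivAt_prodMk_left (𝕜 := ℝ) u v)).unique
    (ha.hasFDerivAt.restrictScalars ℝ)
  intro z
  refine ⟨(z / a, 0), ?_⟩
  simpa [div_mul_cancel₀ z ha₀] using congrArg (fun L : ℂ →L[ℝ] ℂ => L (z / a)) hpartial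

section Strands

variable {s : ℕ} (γ : Fin s → ℝ → ℂ)

-- `braidMap γ c` is the paper's `p`, and `strandProd γ w 1 t` is its braid polynomial `G(w, t)`.
noncomputable def strandProd (u : ℂ) (r t : ℝ) : ℂ := ∏ j, (u - r • γ j t)

noncomputable def braidMap (c : ℝ) (x : ℂ × ℂ) : ℂ := strandProd γ x.1 (‖x.2‖ ^ c) (arg x.2)

variable {γ}

theorem strandProd_periodic {σ : Equiv.Perm (Fin s)}
    (hσ : ∀ j t, γ j (t + 2 * Real.pi) = γ (σ j) t) (u : ℂ) (r : ℝ) :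
    Function.Periodic (strandProd γ u r) (2 * Real.pi) := fun t => by
  simp only [strandProd, hσ]
  exact Equiv.prod_comp σ fun j => u - r • γ j t

theorem strandProd_congr_angle {σ : Equiv.Perm (Fin s)}
    (hσ : ∀ j t, γ j (t + 2 * Real.pi) = γ (σ j) t) (u : ℂ) (r : ℝ) {t t' : ℝ}
    (h : (t : Real.Angle) = t') : strandProd γ u r t = strandProd γ u r t' := by
  obtain ⟨k, hk⟩ := Real.Angle.angle_eq_iff_two_pi_dvd_sub.1 h
  rw [← (strandProd_periodic hσ u r).sub_int_mul_eq k]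
  congr 1
  linarith

theorem strandProd_ofReal_mul (l : ℝ) (u : ℂ) (r t : ℝ) :
    strandProd γ (l * u) (l * r) t = (l : ℂ) ^ s * strandProd γ u r t := by
  calc ∏ j, (l * u - (l * r) • γ j t) = ∏ j, (l * (u - r • γ j t)) :=
        prod_congr rfl fun j _ => by rw [mul_smul, real_smul, real_smul, mul_sub]
    _ = (l : ℂ) ^ s * ∏ j, (u - r • γ j t) := by simp [prod_mul_distrib]

theorem strandProd_eq_pow_mul {r : ℝ} (hr : r ≠ 0) (u : ℂ) (t : ℝ) :
    strandProd γ u r t = (r : ℂ) ^ s * strandProd γ (u / r) 1 t := by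
  rw [← strandProd_ofReal_mul, mul_div_cancel₀ u (ofReal_ne_zero.2 hr), mul_one]

theorem differentiable_strandProd_left (r t : ℝ) :
    Differentiable ℂ fun u => strandProd γ u r t := by
  unfold strandProd
  fun_prop

theorem differentiable_strandProd_right (hγ : ∀ j, Differentiable ℝ (γ j)) (u : ℂ) (r : ℝ) :
    Differentiable ℝ (strandProd γ u r) := by
  unfold strandProd
  fun_prop

theorem braidMap_zero_right {c : ℝ} (hc : c ≠ 0) (u : ℂ) : braidMap γ c (u, 0) = u ^ s := by
  simp [braidMap, strandProd, Real.zero_rpow hc]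

theorem braidMap_exp_smul (c τ : ℝ) (u v : ℂ) :
    braidMap γ c (Real.exp (c * τ) * u, Real.exp τ * v) =
      (Real.exp (c * τ) : ℂ) ^ s * braidMap γ c (u, v) := by
  have hnorm : ‖(Real.exp τ : ℂ) * v‖ ^ c = Real.exp (c * τ) * ‖v‖ ^ c := by
    rw [norm_mul, norm_real, Real.norm_of_nonneg (Real.exp_pos τ).le,
      Real.mul_rpow (Real.exp_pos τ).le (norm_nonneg v), ← Real.exp_mul, mul_comm τ]
  simp only [braidMap, hnorm, arg_real_mul v (Real.exp_pos τ)]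
  exact strandProd_ofReal_mul _ _ _ _

theorem braidMap_exp_mul_I {σ : Equiv.Perm (Fin s)}
    (hσ : ∀ j t, γ j (t + 2 * Real.pi) = γ (σ j) t) (c θ : ℝ) (u : ℂ) {v : ℂ} (hv : v ≠ 0) :
    braidMap γ c (u, exp (θ * I) * v) = strandProd γ u (‖v‖ ^ c) (arg v + θ) := by
  simp only [braidMap, norm_mul, norm_exp_ofReal_mul_I, one_mul]
  refine strandProd_congr_angle hσ _ _ ?_
  rw [arg_mul_coe_angle (exp_ne_zero _) hv, arg_exp_mul_I, Real.Angle.coe_toIocMod, add_comm,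
    Real.Angle.coe_add]

theorem differentiableAt_braidMap {c : ℝ} (hc : 1 < c) (hγ : ∀ j, Differentiable ℝ (γ j))
    {σ : Equiv.Perm (Fin s)} (hσ : ∀ j t, γ j (t + 2 * Real.pi) = γ (σ j) t) (x : ℂ × ℂ) :
    DifferentiableAt ℝ (braidMap γ c) x := by
  obtain ⟨u, v⟩ := x
  rcases eq_or_ne v 0 with rfl | hv
  · have hε : ∀ j, DifferentiableAt ℝ (fun x : ℂ × ℂ => ‖x.2‖ ^ c • γ j (arg x.2)) (u, 0) :=
      fun j => (hasFDerivAt_rpow_smul_comp_arg_zero hc (hγ j).continuous).differentiableAt.comp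
        (f := Prod.snd) (u, (0 : ℂ)) differentiableAt_snd
    unfold braidMap strandProd
    fun_prop
  · obtain ⟨θ, hθ, hθv⟩ := exists_differentiableAt_lift_arg hv
    have hloc : (fun x : ℂ × ℂ => strandProd γ x.1 (‖x.2‖ ^ c) (θ x.2)) =ᶠ[𝓝 (u, v)]
        braidMap γ c :=
      (continuousAt_snd.eventually hθv).mono fun x hx => strandProd_congr_angle hσ _ _ hx
    refine DifferentiableAt.congr_of_eventuallyEq ?_ hloc.symm
    have hθ' : DifferentiableAt ℝ (fun x : ℂ × ℂ => θ x.2) (u, v) := hθ.comp _ differentiableAt_snd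
    have hnorm : DifferentiableAt ℝ (fun x : ℂ × ℂ => ‖x.2‖ ^ c) (u, v) :=
      (differentiableAt_snd.norm ℝ hv).rpow_const (Or.inr hc.le)
    have hγθ : ∀ j, DifferentiableAt ℝ (fun x : ℂ × ℂ => γ j (θ x.2)) (u, v) :=
      fun j => (hγ j _).comp (u, v) hθ'
    unfold strandProd
    fun_prop

theorem fderiv_braidMap_apply_euler {c : ℝ} {u v : ℂ}
    (hd : DifferentiableAt ℝ (braidMap γ c) (u, v)) :
    fderiv ℝ (braidMap γ c) (u, v) (c * u, v) = c * s * braidMap γ c (u, v) := by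
  have hexp : ∀ a : ℝ, HasDerivAt (fun τ : ℝ => (Real.exp (a * τ) : ℂ)) a 0 := fun a => by
    simpa using ((hasDerivAt_id (0 : ℝ)).const_mul a).exp.ofReal_comp
  have hcurve := hd.hasFDerivAt.comp_hasDerivAt_of_eq 0
    (((hexp c).mul_const u).prodMk ((hexp 1).mul_const v)) (by simp)
  have hscaled : HasDerivAt (fun τ : ℝ => (Real.exp (c * τ) : ℂ) ^ s * braidMap γ c (u, v))
      (c * s * braidMap γ c (u, v)) 0 := by
    simpa [mul_comm, mul_left_comm, mul_assoc] using
      ((hexp c).pow s).mul_const (braidMap γ c (u, v))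
  simp only [Function.comp_def, one_mul, ofReal_one, braidMap_exp_smul] at hcurve
  exact hcurve.unique hscaled

theorem fderiv_braidMap_apply_I_mul {σ : Equiv.Perm (Fin s)}
    (hσ : ∀ j t, γ j (t + 2 * Real.pi) = γ (σ j) t) {c : ℝ} {u v d : ℂ} (hv : v ≠ 0)
    (hd : DifferentiableAt ℝ (braidMap γ c) (u, v))
    (ht : HasDerivAt (strandProd γ u (‖v‖ ^ c)) d (arg v)) :
    fderiv ℝ (braidMap γ c) (u, v) (0, I * v) = d := by
  have hrot : HasDerivAt (fun θ : ℝ => exp (θ * I) * v) (I * v) 0 := by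
    simpa using (((hasDerivAt_id (0 : ℝ)).ofReal_comp.mul_const I).cexp).mul_const v
  have hcurve := hd.hasFDerivAt.comp_hasDerivAt_of_eq 0
    ((hasDerivAt_const (0 : ℝ) u).prodMk hrot) (by simp)
  simp only [Function.comp_def, braidMap_exp_mul_I hσ _ _ _ hv] at hcurve
  exact hcurve.unique (HasDerivAt.comp_const_add (arg v) 0 (by simpa using ht))

theorem surjective_fderiv_braidMap_zero_right {c : ℝ} (hc : 1 < c)
    (hγ : ∀ j, Differentiable ℝ (γ j)) {σ : Equiv.Perm (Fin s)}
    (hσ : ∀ j t, γ j (t + 2 * Real.pi) = γ (σ j) t) (hs : s ≠ 0) {u : ℂ} (hu : u ≠ 0) :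
    Function.Surjective (fderiv ℝ (braidMap γ c) (u, 0)) := by
  refine surjective_fderiv_of_hasDerivAt_fst (differentiableAt_braidMap hc hγ hσ _) ?_
    (mul_ne_zero (Nat.cast_ne_zero.2 hs) (pow_ne_zero (s - 1) hu))
  simpa only [braidMap_zero_right (by linarith : c ≠ 0)] using hasDerivAt_pow s u

theorem surjective_fderiv_braidMap_of_im_ne_zero {σ : Equiv.Perm (Fin s)}
    (hσ : ∀ j t, γ j (t + 2 * Real.pi) = γ (σ j) t) (hγ : ∀ j, Differentiable ℝ (γ j)) {c : ℝ}
    (hc : c ≠ 0) (hs : s ≠ 0) {u v : ℂ} (hv : v ≠ 0)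
    (hd : DifferentiableAt ℝ (braidMap γ c) (u, v))
    (him : (deriv (strandProd γ (u / (‖v‖ ^ c : ℝ)) 1) (arg v) /
      strandProd γ (u / (‖v‖ ^ c : ℝ)) 1 (arg v)).im ≠ 0) :
    Function.Surjective (fderiv ℝ (braidMap γ c) (u, v)) := by
  set r := ‖v‖ ^ c
  have hr : (r : ℂ) ≠ 0 := ofReal_ne_zero.2 (Real.rpow_pos_of_pos (norm_pos_iff.2 hv) c).ne'
  set w := u / r
  set t := arg v
  have hscale : strandProd γ u r = fun t' => (r : ℂ) ^ s * strandProd γ w 1 t' :=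
    funext (strandProd_eq_pow_mul (by exact_mod_cast hr) u)
  have ht : HasDerivAt (strandProd γ u r) ((r : ℂ) ^ s * deriv (strandProd γ w 1) t) t := by
    rw [hscale]
    exact (differentiable_strandProd_right hγ w 1 t).hasDerivAt.const_mul _
  refine LinearMap.surjective_of_im_div_ne_zero (fderiv ℝ (braidMap γ c) (u, v)).toLinearMap
    (x := (c * u, v)) (y := (0, I * v)) ?_
  have hratio : (r : ℂ) ^ s * deriv (strandProd γ w 1) t /
      (c * s * ((r : ℂ) ^ s * strandProd γ w 1 t)) = deriv (strandProd γ w 1) t / strandProd γ w 1 t / ((c * s : ℝ) : ℂ) := by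
    push_cast
    field_simp
  rw [ContinuousLinearMap.coe_coe, fderiv_braidMap_apply_euler hd,
    fderiv_braidMap_apply_I_mul hσ hv hd ht, braidMap, hscale, hratio, div_ofReal_im]
  exact div_ne_zero him (mul_ne_zero hc (Nat.cast_ne_zero.2 hs))

theorem surjective_fderiv_braidMap_of_deriv_ne_zero {c : ℝ} {u v : ℂ} (hv : v ≠ 0)
    (hd : DifferentiableAt ℝ (braidMap γ c) (u, v))
    (hw : deriv (fun w => strandProd γ w 1 (arg v)) (u / (‖v‖ ^ c : ℝ)) ≠ 0) :
    Function.Surjective (fderiv ℝ (braidMap γ c) (u, v)) := by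
  set r := ‖v‖ ^ c
  have hr : (r : ℂ) ≠ 0 := ofReal_ne_zero.2 (Real.rpow_pos_of_pos (norm_pos_iff.2 hv) c).ne'
  set G' := deriv (fun w => strandProd γ w 1 (arg v)) (u / r)
  refine surjective_fderiv_of_hasDerivAt_fst hd (a := (r : ℂ) ^ s * (G' * (r : ℂ)⁻¹)) ?_
    (mul_ne_zero (pow_ne_zero _ hr) (mul_ne_zero hw (inv_ne_zero hr)))
  change HasDerivAt (fun u' => strandProd γ u' r (arg v)) _ u
  simp only [strandProd_eq_pow_mul (by exact_mod_cast hr : r ≠ 0)]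
  have hG : HasDerivAt (fun w => strandProd γ w 1 (arg v)) G' (u / r) :=
    (differentiable_strandProd_left 1 _ _).hasDerivAt
  have hdiv : HasDerivAt (fun u' : ℂ => u' / r) (r : ℂ)⁻¹ u := by
    simpa [div_eq_mul_inv] using (hasDerivAt_id u).div_const (r : ℂ)
  exact (hG.comp u hdiv).const_mul _

theorem surjective_fderiv_braidMap {c : ℝ} (hc : 1 < c)
    (hγ : ∀ j, Differentiable ℝ (γ j)) {σ : Equiv.Perm (Fin s)}
    (hσ : ∀ j t, γ j (t + 2 * Real.pi) = γ (σ j) t) (hs : s ≠ 0)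
    (hinj : ∀ t, Function.Injective fun j => γ j t)
    (hreg : ∀ w t, strandProd γ w 1 t ≠ 0 → deriv (fun w => strandProd γ w 1 t) w ≠ 0 ∨
      (deriv (strandProd γ w 1) t / strandProd γ w 1 t).im ≠ 0)
    {u v : ℂ} (hv : v ≠ 0) : Function.Surjective (fderiv ℝ (braidMap γ c) (u, v)) := by
  have hd := differentiableAt_braidMap hc hγ hσ (u, v)
  set w := u / (‖v‖ ^ c : ℝ)
  by_cases hw : deriv (fun w => strandProd γ w 1 (arg v)) w = 0
  · have hG : strandProd γ w 1 (arg v) ≠ 0 := fun h =>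
      deriv_prod_sub_ne_zero_of_eq_zero (hinj (arg v)) (by simpa [strandProd] using h)
        (by simpa [strandProd] using hw)
    exact surjective_fderiv_braidMap_of_im_ne_zero hσ hγ (by linarith) hs hv hd
      ((hreg w _ hG).resolve_left (not_not.2 hw))
  · exact surjective_fderiv_braidMap_of_deriv_ne_zero hv hd hw

end Strands

/-- Under the disjoint-strand hypothesis and the absence of
argument-critical points of the braid polynomial `G`, every point of `ℂ × ℂ`
other than the origin is a regular point of `p` viewed as a map `ℝ⁴ → ℝ²`. -/
theorem stmt_0 (s : ℕ) (hs : 1 ≤ s) (c : ℝ) (hc : 2 ≤ c)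
    (γ : Fin s → ℝ → ℂ) (hγ : ∀ j, ContDiff ℝ 1 (γ j))
    (σ : Equiv.Perm (Fin s))
    (hσ : ∀ j t, γ j (t + 2 * Real.pi) = γ (σ j) t)
    (p : ℂ × ℂ → ℂ)
    (hp0 : ∀ u : ℂ, p (u, 0) = u ^ s)
    (hp : ∀ u v : ℂ, v ≠ 0 →
      p (u, v) = ∏ j, (u - (‖v‖ ^ c : ℝ) • γ j (Complex.arg v)))
    (G : ℂ × ℝ → ℂ)
    (hG : ∀ (u : ℂ) (t : ℝ), G (u, t) = ∏ j, (u - γ j t))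
    (hinj : ∀ t : ℝ, Function.Injective fun j => γ j t)
    (hreg : ∀ (u : ℂ) (t : ℝ), G (u, t) ≠ 0 →
      deriv (fun w => G (w, t)) u ≠ 0 ∨
      (deriv (fun τ => G (u, τ)) t / G (u, t)).im ≠ 0) :
    ∀ u v : ℂ, (u, v) ≠ (0, 0) → Function.Surjective (fderiv ℝ p (u, v)) := by
  have hc₁ : 1 < c := by linarith
  have hs₀ : s ≠ 0 := by omega
  have hγd : ∀ j, Differentiable ℝ (γ j) := fun j => (hγ j).differentiable one_ne_zero
  obtain rfl : p = braidMap γ c := funext fun ⟨u, v⟩ => by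
    rcases eq_or_ne v 0 with rfl | hv
    · rw [hp0, braidMap_zero_right (by linarith)]
    · exact hp u v hv
  obtain rfl : G = fun x => strandProd γ x.1 1 x.2 := funext fun ⟨u, t⟩ => by
    simp [hG, strandProd]
  intro u v huv
  rcases eq_or_ne v 0 with rfl | hv
  · exact surjective_fderiv_braidMap_zero_right hc₁ hγd hσ hs₀ (by rintro rfl; exact huv rfl)
  · exact surjective_fderiv_braidMap hc₁ hγd hσ hs₀ hinj hreg hv
end

section
/- Assume that for every t the map j ↦ (X j t, Y j t) is injective (disjoint strands). Then every zero of p other than the origin is a regular point of p : ℝ⁴ → ℝ²: if (u,v) ≠ (0,0) and p(u,v) = 0, then v ≠ 0 and the real Fréchet derivative fderiv ℝ p (u,v) : ℂ × ℂ → ℂ is surjective. Hence p has a weakly isolated singular point at the origin. -/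
/-!
At a zero `(u, v) ≠ 0` we have `v ≠ 0`, and `u` is one of the roots
`‖v‖^α a X_j(arg v) + i ‖v‖^β b Y_j(arg v)` of `p(·, v)`. These roots are pairwise distinct
because the strands are disjoint, so `u` is a simple root and `∂p/∂u (u, v) ≠ 0`; already the
`u`-direction makes the real derivative surjective. For `p` to be differentiable at `(u, v)` at all,
`arg` is replaced near `v` by the smooth branch `arg (w / v) + arg v`: it differs from `arg w` by a
multiple of `2π`, and the product is `2π`-periodic in the angle because the monodromy only permutes
the strands.
-/

open Complex Topology

theorem hasDerivAt_prod_sub_of_root {𝕜 ι : Type*} [NontriviallyNormedField 𝕜] [Fintype ι]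
    [DecidableEq ι] (c : ι → 𝕜) (i : ι) :
    HasDerivAt (fun w => ∏ j, (w - c j)) (∏ j ∈ Finset.univ.erase i, (c i - c j)) (c i) := by
  have h := HasDerivAt.fun_finsetProd (u := Finset.univ) (x := c i)
    fun j _ => (hasDerivAt_id (c i)).sub_const (c j)
  refine h.congr_deriv ?_
  rw [Finset.sum_eq_single i]
  · simp
  · intro j _ hji
    rw [Finset.prod_eq_zero (Finset.mem_erase.mpr ⟨Ne.symm hji, Finset.mem_univ i⟩) (sub_self _),
      zero_smul]
  · simp

theorem prod_erase_sub_ne_zero {R ι : Type*} [CommRing R] [IsDomain R] [Fintype ι]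
    [DecidableEq ι] {c : ι → R} (hc : Function.Injective c) (i : ι) :
    ∏ j ∈ Finset.univ.erase i, (c i - c j) ≠ 0 :=
  Finset.prod_ne_zero_iff.mpr fun _j hj =>
    sub_ne_zero.mpr fun h => (Finset.mem_erase.mp hj).1 (hc h).symm

section Submersion

variable {E : Type*} [NormedAddCommGroup E] [NormedSpace ℝ E]

theorem surjective_fderiv_of_hasDerivAt_fst_s1 {F : ℂ × E → ℂ} {u d : ℂ} {v : E}
    (hF : DifferentiableAt ℝ F (u, v)) (hd : HasDerivAt (fun w => F (w, v)) d u) (hd0 : d ≠ 0) :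
    Function.Surjective (fderiv ℝ F (u, v)) := by
  have hcomp : HasFDerivAt (fun w => F (w, v))
      ((fderiv ℝ F (u, v)).comp (ContinuousLinearMap.inl ℝ ℂ E)) u :=
    hF.hasFDerivAt.comp u ((hasFDerivAt_id u).prodMk (hasFDerivAt_const v u))
  have hpartial : ∀ z, fderiv ℝ F (u, v) (z, 0) = z * d := fun z => by
    simpa using congrArg (· z) (hcomp.unique (hd.hasFDerivAt.restrictScalars ℝ))
  exact fun z => ⟨(z / d, 0), by rw [hpartial, div_mul_cancel₀ z hd0]⟩

theorem surjective_fderiv_prod_sub_of_injective {ι : Type*} [Fintype ι] {Z : ι → E → ℂ} {v : E}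
    (hZ : ∀ j, DifferentiableAt ℝ (Z j) v) (hinj : Function.Injective fun j => Z j v) (i : ι) :
    Function.Surjective (fderiv ℝ (fun q : ℂ × E => ∏ j, (q.1 - Z j q.2)) (Z i v, v)) := by
  classical
  have hfactor : ∀ j, DifferentiableAt ℝ (fun q : ℂ × E => q.1 - Z j q.2) (Z i v, v) :=
    fun j => differentiableAt_fst.sub ((hZ j).comp (f := Prod.snd) _ differentiableAt_snd)
  exact surjective_fderiv_of_hasDerivAt_fst_s1
    (HasFDerivAt.finsetProd fun j _ => (hfactor j).hasFDerivAt).differentiableAt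
    (hasDerivAt_prod_sub_of_root (fun j => Z j v) i) (prod_erase_sub_ne_zero hinj i)

end Submersion

theorem Complex.differentiableAt_arg_div_add_arg {v : ℂ} (hv : v ≠ 0) :
    DifferentiableAt ℝ (fun w => arg (w / v) + arg v) v := by
  have hslit : v / v ∈ slitPlane := by simp [div_self hv]
  have hlog : DifferentiableAt ℝ (fun w => log (w / v)) v :=
    ((differentiableAt_log hslit).restrictScalars ℝ).comp (f := fun w => w / v) v
      ((differentiableAt_id.div_const v).restrictScalars ℝ)
  simpa only [Function.comp_def, imCLM_apply, log_im] using
    (imCLM.differentiableAt.comp v hlog).add_const (arg v)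

theorem Complex.exists_arg_div_add_arg_eq {v w : ℂ} (hv : v ≠ 0) (hw : w ≠ 0) :
    ∃ k : ℤ, arg (w / v) + arg v = arg w + k * (2 * Real.pi) := by
  have hangle : ((arg (w / v) + arg v : ℝ) : Real.Angle) = arg w := by
    rw [Real.Angle.coe_add, arg_div_coe_angle hw hv, sub_add_cancel]
  obtain ⟨k, hk⟩ := Real.Angle.angle_eq_iff_two_pi_dvd_sub.mp hangle
  exact ⟨k, by linarith⟩

theorem Function.Periodic.comp_arg_div_add_arg {M : Type*} {f : ℝ → M}
    (hf : Function.Periodic f (2 * Real.pi)) {v w : ℂ} (hv : v ≠ 0) (hw : w ≠ 0) :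
    f (arg (w / v) + arg v) = f (arg w) := by
  obtain ⟨k, hk⟩ := exists_arg_div_add_arg_eq hv hw
  rw [hk, hf.int_mul k]

theorem Function.Periodic.prod_of_perm {ι M : Type*} [Fintype ι] [CommMonoid M]
    {f : ι → ℝ → M} {c : ℝ} (σ : Equiv.Perm ι) (hf : ∀ j t, f j (t + c) = f (σ j) t) :
    Function.Periodic (fun t => ∏ j, f j t) c := fun t => by
  simp only [hf]
  exact Equiv.prod_comp σ (f · t)

noncomputable def braidRoot (α β a b : ℝ) (x y : ℝ → ℝ) (w : ℂ) (t : ℝ) : ℂ :=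
  ((‖w‖ ^ α * a * x t : ℝ) : ℂ) + I * ((‖w‖ ^ β * b * y t : ℝ) : ℂ)

section braidRoot

variable {α β a b : ℝ}

theorem braidRoot_injective {ι : Type*} {X Y : ι → ℝ → ℝ} {w : ℂ} {t : ℝ} (ha : a ≠ 0)
    (hb : b ≠ 0) (hw : w ≠ 0) (hinj : Function.Injective fun j => (X j t, Y j t)) :
    Function.Injective fun j => braidRoot α β a b (X j) (Y j) w t := by
  intro j k h
  have hre := congrArg re h
  have him := congrArg im h
  simp only [braidRoot, add_re, add_im, ofReal_re, ofReal_im, mul_re, mul_im, I_re, I_im] at hre him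
  have hw' : 0 < ‖w‖ := norm_pos_iff.mpr hw
  refine hinj (Prod.ext ?_ ?_)
  · simpa [(Real.rpow_pos_of_pos hw' α).ne', ha] using hre
  · simpa [(Real.rpow_pos_of_pos hw' β).ne', hb] using him

theorem differentiableAt_braidRoot {x y : ℝ → ℝ} {θ : ℂ → ℝ} {v : ℂ} (hx : Differentiable ℝ x)
    (hy : Differentiable ℝ y) (hθ : DifferentiableAt ℝ θ v) (hv : v ≠ 0) :
    DifferentiableAt ℝ (fun w => braidRoot α β a b x y w (θ w)) v := by
  have hnorm : DifferentiableAt ℝ (fun w : ℂ => ‖w‖) v := differentiableAt_id.norm ℝ hv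
  have hnorm0 : ‖v‖ ≠ 0 := norm_ne_zero_iff.mpr hv
  unfold braidRoot
  fun_prop (disch := assumption)

theorem eventuallyEq_prod_sub_braidRoot_arg_div_add_arg {ι : Type*} [Fintype ι]
    {X Y : ι → ℝ → ℝ} (σ : Equiv.Perm ι) (hσX : ∀ j t, X j (t + 2 * Real.pi) = X (σ j) t)
    (hσY : ∀ j t, Y j (t + 2 * Real.pi) = Y (σ j) t) {p : ℂ × ℂ → ℂ}
    (hp : ∀ u w, w ≠ 0 → p (u, w) = ∏ j, (u - braidRoot α β a b (X j) (Y j) w (arg w)))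
    (u : ℂ) {v : ℂ} (hv : v ≠ 0) :
    p =ᶠ[𝓝 (u, v)]
      fun q => ∏ j, (q.1 - braidRoot α β a b (X j) (Y j) q.2 (arg (q.2 / v) + arg v)) := by
  filter_upwards [continuous_snd.continuousAt.eventually_ne hv] with q hq
  have hper := Function.Periodic.prod_of_perm (c := 2 * Real.pi)
    (f := fun j t => q.1 - braidRoot α β a b (X j) (Y j) q.2 t) σ
    fun j t => by simp only [braidRoot, hσX, hσY]
  exact (hp q.1 q.2 hq).trans (hper.comp_arg_div_add_arg hv hq).symm

end braidRoot

theorem stmt_1_general (s : ℕ) (hs : 1 ≤ s) (a b : ℝ) (ha : 0 < a) (hb : 0 < b)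
    (α β : ℝ)
    (X Y : Fin s → ℝ → ℝ)
    (hX : ∀ j, ContDiff ℝ 1 (X j)) (hY : ∀ j, ContDiff ℝ 1 (Y j))
    (σ : Equiv.Perm (Fin s))
    (hσX : ∀ j t, X j (t + 2 * Real.pi) = X (σ j) t)
    (hσY : ∀ j t, Y j (t + 2 * Real.pi) = Y (σ j) t)
    (p : ℂ × ℂ → ℂ)
    (hp0 : ∀ u : ℂ, p (u, 0) = u ^ s)
    (hp : ∀ u v : ℂ, v ≠ 0 →
      p (u, v) = ∏ j, (u - ((‖v‖ ^ α * a * X j (Complex.arg v) : ℝ) : ℂ)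
        - Complex.I * ((‖v‖ ^ β * b * Y j (Complex.arg v) : ℝ) : ℂ)))
    (hinj : ∀ t : ℝ, Function.Injective fun j => (X j t, Y j t)) :
    ∀ u v : ℂ, (u, v) ≠ (0, 0) → p (u, v) = 0 →
      v ≠ 0 ∧ Function.Surjective (fderiv ℝ p (u, v)) := by
  intro u v hne hpz
  have hv : v ≠ 0 := by
    rintro rfl
    rw [hp0, pow_eq_zero_iff (by omega)] at hpz
    exact hne (by rw [hpz])
  have hp' : ∀ u w, w ≠ 0 → p (u, w) = ∏ j, (u - braidRoot α β a b (X j) (Y j) w (arg w)) :=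
    fun u w hw => by simp only [hp u w hw, braidRoot, sub_add_eq_sub_sub]
  obtain ⟨i, -, hi⟩ := Finset.prod_eq_zero_iff.mp ((hp' u v hv).symm.trans hpz)
  have hsurj := surjective_fderiv_prod_sub_of_injective
    (Z := fun j w => braidRoot α β a b (X j) (Y j) w (arg (w / v) + arg v))
    (fun j => differentiableAt_braidRoot ((hX j).differentiable one_ne_zero)
      ((hY j).differentiable one_ne_zero) (differentiableAt_arg_div_add_arg hv) hv)
    (by simpa only [div_self hv, arg_one, zero_add] using
      braidRoot_injective ha.ne' hb.ne' hv (hinj (arg v))) i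
  simp only [div_self hv, arg_one, zero_add, ← sub_eq_zero.mp hi] at hsurj
  refine ⟨hv, ?_⟩
  rwa [(eventuallyEq_prod_sub_braidRoot_arg_div_add_arg σ hσX hσY hp' u hv).fderiv_eq]

/-- For the map `p = p_{a,b,k}` of Lemma `general`, every zero of
`p` other than the origin has `v ≠ 0` and is a regular point of `p : ℝ⁴ → ℝ²`;
hence `p` has a weakly isolated singular point at the origin. -/
theorem stmt_1 (s : ℕ) (hs : 1 ≤ s) (a b : ℝ) (ha : 0 < a) (hb : 0 < b)
    (α β : ℝ) (hα : 1 < α) (hβ : 1 < β)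
    (X Y : Fin s → ℝ → ℝ)
    (hX : ∀ j, ContDiff ℝ 1 (X j)) (hY : ∀ j, ContDiff ℝ 1 (Y j))
    (σ : Equiv.Perm (Fin s))
    (hσX : ∀ j t, X j (t + 2 * Real.pi) = X (σ j) t)
    (hσY : ∀ j t, Y j (t + 2 * Real.pi) = Y (σ j) t)
    (p : ℂ × ℂ → ℂ)
    (hp0 : ∀ u : ℂ, p (u, 0) = u ^ s)
    (hp : ∀ u v : ℂ, v ≠ 0 →
      p (u, v) = ∏ j, (u - ((‖v‖ ^ α * a * X j (Complex.arg v) : ℝ) : ℂ)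
        - Complex.I * ((‖v‖ ^ β * b * Y j (Complex.arg v) : ℝ) : ℂ)))
    (hinj : ∀ t : ℝ, Function.Injective fun j => (X j t, Y j t)) :
    ∀ u v : ℂ, (u, v) ≠ (0, 0) → p (u, v) = 0 →
      v ≠ 0 ∧ Function.Surjective (fderiv ℝ p (u, v)) :=
  stmt_1_general s hs a b ha hb α β X Y hX hY σ hσX hσY p hp0 hp hinj
end

section
/- For every (u,v) with v ≠ 0 and p(u,v) = 0, there exists a vector w ∈ ℂ × ℂ with fderiv ℝ p (u,v) w = 0 and ⟪(u,v), w⟫ > 0. Explicitly, if j is an index with u = ‖v‖^α·a·X j t + i·‖v‖^β·b·Y j t where t = Complex.arg v and r = ‖v‖, one may take w = (α r^{α−1} a (X j t) + i β r^{β−1} b (Y j t), e^{it}), for which ⟪(u,v), w⟫ = α r^{2α−1} a² (X j t)² + β r^{2β−1} b² (Y j t)² + r > 0. Consequently the zero set of p intersects every sphere centred at the origin transversely away from the origin. -/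
/-
Fix `t = arg v`. Along the radial curve `ρ ↦ (ρ^α a X_j(t) + i ρ^β b Y_j(t), ρ e^{it})` the `j`-th
factor of `p` vanishes identically, so the velocity `w` of the curve at `ρ = ‖v‖` lies in the
kernel of `Dp(u, v)`, and pairing `w` with `(u, v)` gives two nonnegative terms plus `‖v‖`.
That `p` is differentiable at all comes from the permutation condition: the product is
`2π`-periodic in the angle, so `arg` may be replaced locally by a differentiable branch.
-/

open Complex

noncomputable def realInner4 (x y : ℂ × ℂ) : ℝ :=
  (x.1 * (starRingEnd ℂ) y.1).re + (x.2 * (starRingEnd ℂ) y.2).re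

open Filter Topology

namespace Complex

theorem differentiableAt_arg {z : ℂ} (hz : z ∈ slitPlane) : DifferentiableAt ℝ arg z := by
  have : arg = fun w => (log w).im := funext fun w => (log_im w).symm
  rw [this]
  exact imCLM.differentiableAt.comp z ((differentiableAt_log hz).restrictScalars ℝ)

theorem arg_neg_add_pi_eq_or {w : ℂ} (hw : -w ∈ slitPlane) :
    arg (-w) + Real.pi = arg w ∨ arg (-w) + Real.pi = arg w + 2 * Real.pi := by
  rcases lt_or_ge w.im 0 with him | him
  · right
    rw [arg_neg_eq_arg_add_pi_of_im_neg him]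
    ring
  · left
    have hcases : 0 < w.im ∨ w.im = 0 ∧ w.re < 0 := by
      rw [mem_slitPlane_iff] at hw
      simp only [neg_re, neg_im, neg_pos, ne_eq, neg_eq_zero] at hw
      rcases him.lt_or_eq with hpos | hzero
      · exact Or.inl hpos
      · exact Or.inr ⟨hzero.symm, hw.resolve_right (not_not.2 hzero.symm)⟩
    rw [arg_neg_eq_arg_sub_pi_iff.2 hcases]
    ring

/-- Near the negative real axis the branch is `arg (-w) + π`. -/
theorem exists_differentiableAt_arg_branch {v : ℂ} (hv : v ≠ 0) :
    ∃ θ : ℂ → ℝ, DifferentiableAt ℝ θ v ∧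
      ∀ᶠ w in 𝓝 v, θ w = arg w ∨ θ w = arg w + 2 * Real.pi := by
  rcases mem_slitPlane_or_neg_mem_slitPlane hv with hv' | hv'
  · exact ⟨arg, differentiableAt_arg hv', Eventually.of_forall fun _ => Or.inl rfl⟩
  · refine ⟨fun w => arg (-w) + Real.pi,
      ((differentiableAt_arg hv').comp v differentiableAt_id.neg).add_const _, ?_⟩
    filter_upwards [continuous_neg.continuousAt.preimage_mem_nhds
      (isOpen_slitPlane.mem_nhds hv')] with w hw
    exact arg_neg_add_pi_eq_or hw

theorem ofReal_norm_mul_exp_I_mul_arg (v : ℂ) : (‖v‖ : ℂ) * exp (I * arg v) = v := by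
  rw [mul_comm I]
  exact norm_mul_exp_arg_mul_I v

theorem norm_ofReal_mul_exp_I_mul {ρ : ℝ} (hρ : 0 ≤ ρ) (t : ℝ) : ‖(ρ : ℂ) * exp (I * t)‖ = ρ := by
  rw [norm_mul, mul_comm I, norm_exp_ofReal_mul_I, norm_real, Real.norm_of_nonneg hρ, mul_one]

theorem arg_ofReal_mul_exp_I_mul_arg {ρ : ℝ} (hρ : 0 < ρ) (v : ℂ) :
    arg (ρ * exp (I * arg v)) = arg v := by
  rw [arg_real_mul _ hρ, arg_exp]
  simp

end Complex

theorem Function.Periodic.differentiableAt_comp_arg {E G : Type*}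
    [NormedAddCommGroup E] [NormedSpace ℝ E] [NormedAddCommGroup G] [NormedSpace ℝ G]
    {F : E × ℝ → G} (hper : ∀ x, Function.Periodic (fun t => F (x, t)) (2 * Real.pi))
    {f : E → ℂ} {x : E} (hf : DifferentiableAt ℝ f x) (hfx : f x ≠ 0)
    (hF : ∀ t, DifferentiableAt ℝ F (x, t)) :
    DifferentiableAt ℝ (fun y => F (y, arg (f y))) x := by
  obtain ⟨θ, hθ, hθarg⟩ := exists_differentiableAt_arg_branch hfx
  refine ((hF _).comp x (differentiableAt_id.prodMk (hθ.comp x hf))).congr_of_eventuallyEq ?_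
  filter_upwards [hf.continuousAt.eventually hθarg] with y hy
  rcases hy with h | h <;> simp only [Function.comp_apply, id, h, hper y (arg (f y))]

theorem Function.periodic_prod_of_perm {ι M α : Type*} [Fintype ι] [CommMonoid M] [Add α]
    {f : ι → α → M} {c : α} (σ : Equiv.Perm ι) (h : ∀ j t, f j (t + c) = f (σ j) t) :
    Function.Periodic (fun t => ∏ j, f j t) c := fun t => by
  simp only [h]
  exact Equiv.prod_comp σ (f · t)

theorem HasDerivAt.fderiv_apply_eq_zero {E F : Type*}
    [NormedAddCommGroup E] [NormedSpace ℝ E] [NormedAddCommGroup F] [NormedSpace ℝ F]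
    {p : E → F} {c : ℝ → E} {w : E} {τ : ℝ} (hc : HasDerivAt c w τ)
    (hp : DifferentiableAt ℝ p (c τ)) (hpc : ∀ᶠ ρ in 𝓝 τ, p (c ρ) = p (c τ)) :
    fderiv ℝ p (c τ) w = 0 :=
  (hp.hasFDerivAt.comp_hasDerivAt τ hc).unique
    ((hasDerivAt_const τ (p (c τ))).congr_of_eventuallyEq hpc)

section Strands

variable {s : ℕ} (a b α β : ℝ)

/-- With `(x, y) = (X_j t, Y_j t)` and `r = ‖v‖`, this is the `j`-th root of `p(·, v)`. -/
noncomputable def strandPoint (x y r : ℝ) : ℂ :=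
  ((r ^ α * a * x : ℝ) : ℂ) + I * ((r ^ β * b * y : ℝ) : ℂ)

/-- The polynomial `p(u, v)` in polar coordinates `r = ‖v‖`, `t = arg v`. -/
noncomputable def strandProduct (X Y : Fin s → ℝ → ℝ) (u : ℂ) (r t : ℝ) : ℂ :=
  ∏ j, (u - ((r ^ α * a * X j t : ℝ) : ℂ) - I * ((r ^ β * b * Y j t : ℝ) : ℂ))

theorem strandProduct_strandPoint (X Y : Fin s → ℝ → ℝ) (j : Fin s) (r t : ℝ) :
    strandProduct a b α β X Y (strandPoint a b α β (X j t) (Y j t) r) r t = 0 :=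
  Finset.prod_eq_zero (Finset.mem_univ j) (by rw [strandPoint]; ring)

theorem periodic_strandProduct {X Y : Fin s → ℝ → ℝ} (σ : Equiv.Perm (Fin s))
    (hσX : ∀ j t, X j (t + 2 * Real.pi) = X (σ j) t)
    (hσY : ∀ j t, Y j (t + 2 * Real.pi) = Y (σ j) t) (u : ℂ) (r : ℝ) :
    Function.Periodic (strandProduct a b α β X Y u r) (2 * Real.pi) :=
  Function.periodic_prod_of_perm σ fun j t => by rw [hσX, hσY]

theorem differentiableAt_strandProduct {X Y : Fin s → ℝ → ℝ}
    (hX : ∀ j, Differentiable ℝ (X j)) (hY : ∀ j, Differentiable ℝ (Y j))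
    {q : ℂ × ℂ} (hq : q.2 ≠ 0) (t : ℝ) :
    DifferentiableAt ℝ (fun z : (ℂ × ℂ) × ℝ => strandProduct a b α β X Y z.1.1 ‖z.1.2‖ z.2)
      (q, t) := by
  have hnorm : DifferentiableAt ℝ (fun z : (ℂ × ℂ) × ℝ => ‖z.1.2‖) (q, t) :=
    differentiableAt_fst.snd.norm ℝ hq
  have hcoe : Differentiable ℝ ((↑) : ℝ → ℂ) := ofRealCLM.differentiable
  unfold strandProduct
  fun_prop (disch := exact Or.inl (norm_ne_zero_iff.2 hq))

theorem differentiableAt_of_eq_strandProduct {X Y : Fin s → ℝ → ℝ}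
    (hX : ∀ j, Differentiable ℝ (X j)) (hY : ∀ j, Differentiable ℝ (Y j))
    (σ : Equiv.Perm (Fin s))
    (hσX : ∀ j t, X j (t + 2 * Real.pi) = X (σ j) t)
    (hσY : ∀ j t, Y j (t + 2 * Real.pi) = Y (σ j) t)
    {p : ℂ × ℂ → ℂ} (hp : ∀ u v : ℂ, v ≠ 0 → p (u, v) = strandProduct a b α β X Y u ‖v‖ (arg v))
    {q : ℂ × ℂ} (hq : q.2 ≠ 0) : DifferentiableAt ℝ p q := by
  have hF := Function.Periodic.differentiableAt_comp_arg
    (F := fun z : (ℂ × ℂ) × ℝ => strandProduct a b α β X Y z.1.1 ‖z.1.2‖ z.2)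
    (fun z => periodic_strandProduct a b α β σ hσX hσY z.1 ‖z.2‖)
    differentiableAt_snd hq (differentiableAt_strandProduct a b α β hX hY hq)
  refine hF.congr_of_eventuallyEq ?_
  filter_upwards [continuous_snd.continuousAt.eventually_ne hq] with z hz
  exact hp z.1 z.2 hz

variable {a b α β}

theorem hasDerivAt_strandPoint (x y : ℝ) {r : ℝ} (hr : 0 < r) :
    HasDerivAt (strandPoint a b α β x y)
      (((α * r ^ (α - 1) * a * x : ℝ) : ℂ) + I * ((β * r ^ (β - 1) * b * y : ℝ) : ℂ)) r := by
  have hα := ((Real.hasDerivAt_rpow_const (p := α) (Or.inl hr.ne')).mul_const a).mul_const x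
  have hβ := ((Real.hasDerivAt_rpow_const (p := β) (Or.inl hr.ne')).mul_const b).mul_const y
  exact hα.ofReal_comp.add (hβ.ofReal_comp.const_mul I)

theorem fderiv_strandPoint_eq_zero {p : ℂ × ℂ → ℂ} (x y : ℝ) {v : ℂ} (hv : v ≠ 0)
    (hp : DifferentiableAt ℝ p (strandPoint a b α β x y ‖v‖, v))
    (hzero : ∀ ρ : ℝ, 0 < ρ → p (strandPoint a b α β x y ρ, ρ * exp (I * arg v)) = 0) :
    fderiv ℝ p (strandPoint a b α β x y ‖v‖, v)
      (((α * ‖v‖ ^ (α - 1) * a * x : ℝ) : ℂ) + I * ((β * ‖v‖ ^ (β - 1) * b * y : ℝ) : ℂ),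
        exp (I * arg v)) = 0 := by
  have hr : 0 < ‖v‖ := norm_pos_iff.2 hv
  have hc : HasDerivAt (fun ρ : ℝ => (strandPoint a b α β x y ρ, (ρ : ℂ) * exp (I * arg v)))
      (((α * ‖v‖ ^ (α - 1) * a * x : ℝ) : ℂ) + I * ((β * ‖v‖ ^ (β - 1) * b * y : ℝ) : ℂ),
        exp (I * arg v)) ‖v‖ :=
    (hasDerivAt_strandPoint x y hr).prodMk
      (by simpa using (hasDerivAt_id ‖v‖).ofReal_comp.mul_const (exp (I * arg v)))
  have hcv := ofReal_norm_mul_exp_I_mul_arg v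
  have hpv := hzero _ hr
  have hkernel := hc.fderiv_apply_eq_zero (p := p)
  simp only [hcv] at hkernel hpv
  refine hkernel hp ?_
  filter_upwards [Ioi_mem_nhds hr] with ρ hρ
  rw [hzero ρ hρ, hpv]

theorem realInner4_strandPoint (x y : ℝ) {v : ℂ} (hv : v ≠ 0) :
    realInner4 (strandPoint a b α β x y ‖v‖, v)
        (((α * ‖v‖ ^ (α - 1) * a * x : ℝ) : ℂ) + I * ((β * ‖v‖ ^ (β - 1) * b * y : ℝ) : ℂ),
          exp (I * arg v))
      = α * ‖v‖ ^ (2 * α - 1) * a ^ 2 * x ^ 2 + β * ‖v‖ ^ (2 * β - 1) * b ^ 2 * y ^ 2 + ‖v‖ := by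
  have hr : 0 < ‖v‖ := norm_pos_iff.2 hv
  have hv' : (v * (starRingEnd ℂ) (exp (I * arg v))).re = ‖v‖ := by
    conv_lhs => enter [1, 1]; rw [← ofReal_norm_mul_exp_I_mul_arg v]
    rw [mul_assoc, mul_conj, normSq_eq_norm_sq, mul_comm I, norm_exp_ofReal_mul_I]
    simp
  have hpowα : ‖v‖ ^ α * ‖v‖ ^ (α - 1) = ‖v‖ ^ (2 * α - 1) := by
    rw [← Real.rpow_add hr]; ring_nf
  have hpowβ : ‖v‖ ^ β * ‖v‖ ^ (β - 1) = ‖v‖ ^ (2 * β - 1) := by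
    rw [← Real.rpow_add hr]; ring_nf
  rw [realInner4, hv']
  simp only [strandPoint, map_add, map_mul, conj_ofReal, conj_I, mul_re, add_re, add_im, mul_im,
    ofReal_re, ofReal_im, I_re, I_im, neg_re, neg_im]
  linear_combination (α * a ^ 2 * x ^ 2) * hpowα + (β * b ^ 2 * y ^ 2) * hpowβ

theorem strandInner_pos (hα : 0 ≤ α) (hβ : 0 ≤ β) (x y : ℝ) {v : ℂ} (hv : v ≠ 0) :
    0 < α * ‖v‖ ^ (2 * α - 1) * a ^ 2 * x ^ 2 + β * ‖v‖ ^ (2 * β - 1) * b ^ 2 * y ^ 2 + ‖v‖ := by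
  have := norm_pos_iff.2 hv
  positivity

theorem apply_strandPoint_eq_zero_of_eq_strandProduct {X Y : Fin s → ℝ → ℝ} {p : ℂ × ℂ → ℂ}
    (hp : ∀ u v : ℂ, v ≠ 0 → p (u, v) = strandProduct a b α β X Y u ‖v‖ (arg v))
    (j : Fin s) (v : ℂ) {ρ : ℝ} (hρ : 0 < ρ) :
    p (strandPoint a b α β (X j (arg v)) (Y j (arg v)) ρ, ρ * exp (I * arg v)) = 0 := by
  have hne : (ρ : ℂ) * exp (I * arg v) ≠ 0 := mul_ne_zero (ofReal_ne_zero.2 hρ.ne') (exp_ne_zero _)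
  rw [hp _ _ hne, norm_ofReal_mul_exp_I_mul hρ.le, arg_ofReal_mul_exp_I_mul_arg hρ]
  exact strandProduct_strandPoint a b α β X Y j ρ (arg v)

end Strands

theorem stmt_2_general (s : ℕ) (a b : ℝ)
    (α β : ℝ) (hα : 1 < α) (hβ : 1 < β)
    (X Y : Fin s → ℝ → ℝ)
    (hX : ∀ j, ContDiff ℝ 1 (X j)) (hY : ∀ j, ContDiff ℝ 1 (Y j))
    (σ : Equiv.Perm (Fin s))
    (hσX : ∀ j t, X j (t + 2 * Real.pi) = X (σ j) t)
    (hσY : ∀ j t, Y j (t + 2 * Real.pi) = Y (σ j) t)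
    (p : ℂ × ℂ → ℂ)
    (hp : ∀ u v : ℂ, v ≠ 0 →
      p (u, v) = ∏ j, (u - ((‖v‖ ^ α * a * X j (Complex.arg v) : ℝ) : ℂ)
        - Complex.I * ((‖v‖ ^ β * b * Y j (Complex.arg v) : ℝ) : ℂ))) :
    ∀ u v : ℂ, v ≠ 0 → p (u, v) = 0 →
      (∃ w : ℂ × ℂ, fderiv ℝ p (u, v) w = 0 ∧ 0 < realInner4 (u, v) w) ∧
      ∀ j : Fin s,
        u = ((‖v‖ ^ α * a * X j (Complex.arg v) : ℝ) : ℂ)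
            + Complex.I * ((‖v‖ ^ β * b * Y j (Complex.arg v) : ℝ) : ℂ) →
        fderiv ℝ p (u, v)
            (((α * ‖v‖ ^ (α - 1) * a * X j (Complex.arg v) : ℝ) : ℂ)
              + Complex.I * ((β * ‖v‖ ^ (β - 1) * b * Y j (Complex.arg v) : ℝ) : ℂ),
             Complex.exp (Complex.I * (Complex.arg v : ℂ))) = 0 ∧
        realInner4 (u, v)
            (((α * ‖v‖ ^ (α - 1) * a * X j (Complex.arg v) : ℝ) : ℂ)
              + Complex.I * ((β * ‖v‖ ^ (β - 1) * b * Y j (Complex.arg v) : ℝ) : ℂ),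
             Complex.exp (Complex.I * (Complex.arg v : ℂ)))
          = α * ‖v‖ ^ (2 * α - 1) * a ^ 2 * X j (Complex.arg v) ^ 2
            + β * ‖v‖ ^ (2 * β - 1) * b ^ 2 * Y j (Complex.arg v) ^ 2 + ‖v‖ ∧
        0 < α * ‖v‖ ^ (2 * α - 1) * a ^ 2 * X j (Complex.arg v) ^ 2
            + β * ‖v‖ ^ (2 * β - 1) * b ^ 2 * Y j (Complex.arg v) ^ 2 + ‖v‖ := by
  intro u v hv hpz
  have hdiff (w : ℂ) : DifferentiableAt ℝ p (w, v) :=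
    differentiableAt_of_eq_strandProduct a b α β (fun j => (hX j).differentiable one_ne_zero)
      (fun j => (hY j).differentiable one_ne_zero) σ hσX hσY hp (q := (w, v)) hv
  have hker (j : Fin s) := fderiv_strandPoint_eq_zero _ _ hv (hdiff _)
    fun _ hρ => apply_strandPoint_eq_zero_of_eq_strandProduct hp j v hρ
  have hinner (j : Fin s) := realInner4_strandPoint (a := a) (b := b) (α := α) (β := β)
    (X j (arg v)) (Y j (arg v)) hv
  have hpos (j : Fin s) := strandInner_pos (a := a) (b := b) (α := α) (β := β)
    (by linarith) (by linarith) (X j (arg v)) (Y j (arg v)) hv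
  refine ⟨?_, fun j hu => hu ▸ ⟨hker j, hinner j, hpos j⟩⟩
  obtain ⟨j, -, hj⟩ := Finset.prod_eq_zero_iff.1 ((hp u v hv).symm.trans hpz)
  obtain rfl : u = strandPoint a b α β (X j (arg v)) (Y j (arg v)) ‖v‖ := by
    rw [strandPoint]; linear_combination hj
  exact ⟨_, hker j, hinner j ▸ hpos j⟩

/-- transversality of the zero set of `p = p_{a,b,k}` to the
spheres centred at the origin: at every zero with `v ≠ 0` there is a vector
`w` in the kernel of the real derivative of `p` with `⟪(u,v), w⟫ > 0`;
explicitly, if `u` is the `j`-th root, one may take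
`w = (α r^{α−1} a X_j(t) + i β r^{β−1} b Y_j(t), e^{it})`, whose inner product
with `(u,v)` equals `α r^{2α−1} a² X_j(t)² + β r^{2β−1} b² Y_j(t)² + r > 0`. -/
theorem stmt_2 (s : ℕ) (hs : 1 ≤ s) (a b : ℝ) (ha : 0 < a) (hb : 0 < b)
    (α β : ℝ) (hα : 1 < α) (hβ : 1 < β)
    (X Y : Fin s → ℝ → ℝ)
    (hX : ∀ j, ContDiff ℝ 1 (X j)) (hY : ∀ j, ContDiff ℝ 1 (Y j))
    (σ : Equiv.Perm (Fin s))
    (hσX : ∀ j t, X j (t + 2 * Real.pi) = X (σ j) t)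
    (hσY : ∀ j t, Y j (t + 2 * Real.pi) = Y (σ j) t)
    (p : ℂ × ℂ → ℂ)
    (hp0 : ∀ u : ℂ, p (u, 0) = u ^ s)
    (hp : ∀ u v : ℂ, v ≠ 0 →
      p (u, v) = ∏ j, (u - ((‖v‖ ^ α * a * X j (Complex.arg v) : ℝ) : ℂ)
        - Complex.I * ((‖v‖ ^ β * b * Y j (Complex.arg v) : ℝ) : ℂ))) :
    ∀ u v : ℂ, v ≠ 0 → p (u, v) = 0 →
      (∃ w : ℂ × ℂ, fderiv ℝ p (u, v) w = 0 ∧ 0 < realInner4 (u, v) w) ∧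
      ∀ j : Fin s,
        u = ((‖v‖ ^ α * a * X j (Complex.arg v) : ℝ) : ℂ)
            + Complex.I * ((‖v‖ ^ β * b * Y j (Complex.arg v) : ℝ) : ℂ) →
        fderiv ℝ p (u, v)
            (((α * ‖v‖ ^ (α - 1) * a * X j (Complex.arg v) : ℝ) : ℂ)
              + Complex.I * ((β * ‖v‖ ^ (β - 1) * b * Y j (Complex.arg v) : ℝ) : ℂ),
             Complex.exp (Complex.I * (Complex.arg v : ℂ))) = 0 ∧
        realInner4 (u, v)
            (((α * ‖v‖ ^ (α - 1) * a * X j (Complex.arg v) : ℝ) : ℂ)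
              + Complex.I * ((β * ‖v‖ ^ (β - 1) * b * Y j (Complex.arg v) : ℝ) : ℂ),
             Complex.exp (Complex.I * (Complex.arg v : ℂ)))
          = α * ‖v‖ ^ (2 * α - 1) * a ^ 2 * X j (Complex.arg v) ^ 2
            + β * ‖v‖ ^ (2 * β - 1) * b ^ 2 * Y j (Complex.arg v) ^ 2 + ‖v‖ ∧
        0 < α * ‖v‖ ^ (2 * α - 1) * a ^ 2 * X j (Complex.arg v) ^ 2
            + β * ‖v‖ ^ (2 * β - 1) * b ^ 2 * Y j (Complex.arg v) ^ 2 + ‖v‖ :=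
  stmt_2_general s a b α β hα hβ X Y hX hY σ hσX hσY p hp
end

section
/- Let m be a natural number and s, A, M integers such that 2^m divides s but 2^{m+1} does not divide s, 2^m divides A, and s divides A + 2^{m+1}·M. Then the integer A/2^m − (A + 2^{m+1}·M)/s is even (the two integer divisions being exact by the divisibility hypotheses; note s ≠ 0 follows from ¬(2^{m+1} ∣ s)). -/
/-! Write `s = 2^m t` with `t` odd, `A = 2^m a` and `A + 2^{m+1} M = s q`. Cancelling `2^m` gives
`a + 2M = t q`, so `a - q = (t - 1) q - 2M` is even since `t - 1` is. -/

theorem Int.exists_odd_of_pow_two_dvd_of_not_dvd {m : ℕ} {s : ℤ} (h : 2 ^ m ∣ s)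
    (h' : ¬ 2 ^ (m + 1) ∣ s) : ∃ t, Odd t ∧ s = 2 ^ m * t := by
  obtain ⟨t, rfl⟩ := h
  refine ⟨t, Int.not_even_iff_odd.mp ?_, rfl⟩
  rintro ⟨u, rfl⟩
  exact h' ⟨u, by ring⟩

theorem even_sub_of_add_two_mul_eq_odd_mul {R : Type*} [CommRing R] {a M t q : R} (ht : Odd t)
    (h : a + 2 * M = t * q) : Even (a - q) := by
  obtain ⟨k, rfl⟩ := ht
  exact ⟨k * q - M, by linear_combination h⟩

/-- the key arithmetic claim of Lemma `odd`: if `2^m` is the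
highest power of two dividing `s`, `2^m ∣ A` and `s ∣ A + 2^{m+1}·M`, then the
integer `A/2^m − (A + 2^{m+1}·M)/s` is even. -/
theorem stmt_4 (m : ℕ) (s A M : ℤ)
    (h1 : (2 : ℤ) ^ m ∣ s) (h2 : ¬ (2 : ℤ) ^ (m + 1) ∣ s)
    (h3 : (2 : ℤ) ^ m ∣ A) (h4 : s ∣ A + 2 ^ (m + 1) * M) :
    Even (A / 2 ^ m - (A + 2 ^ (m + 1) * M) / s) := by
  obtain ⟨t, ht, rfl⟩ := Int.exists_odd_of_pow_two_dvd_of_not_dvd h1 h2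
  obtain ⟨a, rfl⟩ := h3
  obtain ⟨q, hq⟩ := h4
  have h2m : (2 : ℤ) ^ m ≠ 0 := by positivity
  have ht0 : t ≠ 0 := by rintro rfl; simp at ht
  have hcancel : a + 2 * M = t * q :=
    mul_left_cancel₀ h2m (by linear_combination hq)
  rw [hq, Int.mul_ediv_cancel_left _ h2m, Int.mul_ediv_cancel_left _ (mul_ne_zero h2m ht0)]
  exact even_sub_of_add_two_mul_eq_odd_mul ht hcancel
end

section
/- For every u₀ ∈ ℂ, the map p has a real Fréchet derivative at the point (u₀, 0) equal to the ℝ-linear map (h,w) ↦ s·u₀^{s−1}·h. In particular, if s ≥ 2 then fderiv ℝ p (0,0) = 0, i.e. the origin is a singular point of p viewed as a map ℝ⁴ → ℝ². -/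
/-!
Put `w j v := ‖v‖ ^ c • γ j (arg v)`. Since `arg v ∈ [-π, π]`, each `γ j ∘ arg` is bounded, so
`w j v = O(‖v‖ ^ c) = o(‖v‖)` because `c > 1`; hence `w j` has derivative `0` at `0`. As
`w j 0 = 0`, the map `p` is `(u, v) ↦ ∏ j, (u - w j v)` everywhere, and the product rule at
`(u₀, 0)` leaves only the `s` terms `u₀ ^ (s - 1) • fst`.
-/

open Complex Asymptotics Filter Topology

theorem isLittleO_norm_rpow_id {E : Type*} [NormedAddCommGroup E] {c : ℝ} (hc : 1 < c) :
    (fun x : E => ‖x‖ ^ c) =o[𝓝 0] fun x => x := by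
  have hsmall : (fun x : E => ‖x‖ ^ (c - 1)) =o[𝓝 0] fun _ => (1 : ℝ) := by
    rw [isLittleO_one_iff]
    simpa [Function.comp_def, Real.zero_rpow (sub_pos.2 hc).ne'] using
      ((Real.continuousAt_rpow_const 0 (c - 1) (Or.inr (sub_pos.2 hc).le)).tendsto).comp
        (tendsto_norm_zero (E := E))
  refine isLittleO_norm_right.mp <|
    (hsmall.mul_isBigO (isBigO_refl (fun x : E => ‖x‖) _)).congr'
      (Eventually.of_forall fun x => ?_) (Eventually.of_forall fun x => one_mul ‖x‖)
  show ‖x‖ ^ (c - 1) * ‖x‖ = ‖x‖ ^ c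
  rw [← Real.rpow_add_one' (norm_nonneg x) (by linarith), sub_add_cancel]

theorem hasFDerivAt_norm_rpow_smul_of_bounded {E F : Type*} [NormedAddCommGroup E]
    [NormedSpace ℝ E] [NormedAddCommGroup F] [NormedSpace ℝ F] {c : ℝ} (hc : 1 < c)
    {g : E → F} {B : ℝ} (hg : ∀ x, ‖g x‖ ≤ B) :
    HasFDerivAt (fun x => ‖x‖ ^ c • g x) (0 : E →L[ℝ] F) 0 := by
  rw [hasFDerivAt_iff_isLittleO_nhds_zero]
  have hbig : (fun x => ‖x‖ ^ c • g x) =O[𝓝 0] fun x : E => ‖x‖ ^ c :=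
    .of_bound B (Eventually.of_forall fun x => by
      rw [norm_smul, Real.norm_of_nonneg (Real.rpow_nonneg (norm_nonneg x) c), mul_comm]
      exact mul_le_mul_of_nonneg_right (hg x) (Real.rpow_nonneg (norm_nonneg x) c))
  simpa [Real.zero_rpow (zero_lt_one.trans hc).ne'] using
    hbig.trans_isLittleO (isLittleO_norm_rpow_id hc)

theorem exists_norm_comp_arg_le {F : Type*} [NormedAddCommGroup F] {g : ℝ → F}
    (hg : Continuous g) : ∃ B, ∀ v : ℂ, ‖g (arg v)‖ ≤ B := by
  obtain ⟨B, hB⟩ := (isCompact_Icc (a := -Real.pi) (b := Real.pi)).exists_bound_of_continuousOn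
    hg.continuousOn
  exact ⟨B, fun v => hB _ ⟨(neg_pi_lt_arg v).le, arg_le_pi v⟩⟩

theorem hasFDerivAt_prod_fst_sub {ι E 𝔸 : Type*} [Fintype ι] [NormedAddCommGroup E]
    [NormedSpace ℝ E] [NormedCommRing 𝔸] [NormedAlgebra ℝ 𝔸] {w : ι → E → 𝔸}
    (hw0 : ∀ j, w j 0 = 0) (hw : ∀ j, HasFDerivAt (w j) (0 : E →L[ℝ] 𝔸) 0) (u₀ : 𝔸) :
    HasFDerivAt (fun x : 𝔸 × E => ∏ j, (x.1 - w j x.2))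
      (((Fintype.card ι : 𝔸) * u₀ ^ (Fintype.card ι - 1)) • ContinuousLinearMap.fst ℝ 𝔸 E)
      (u₀, 0) := by
  classical
  have hfactor : ∀ j, HasFDerivAt (fun x : 𝔸 × E => x.1 - w j x.2)
      (ContinuousLinearMap.fst ℝ 𝔸 E) (u₀, 0) := fun j => by
    have hsnd : HasFDerivAt (fun x : 𝔸 × E => w j x.2) (0 : 𝔸 × E →L[ℝ] 𝔸) (u₀, 0) := by
      simpa [Function.comp_def] using
        (hw j).comp (u₀, (0 : E)) (hasFDerivAt_snd (𝕜 := ℝ) (p := (u₀, (0 : E))))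
    simpa using hasFDerivAt_fst.fun_sub hsnd
  refine (HasFDerivAt.finsetProd (u := Finset.univ) fun j _ => hfactor j).congr_fderiv ?_
  ext x <;> simp [hw0, mul_assoc]

theorem stmt_6_general (s : ℕ) (c : ℝ) (hc : 2 ≤ c)
    (γ : Fin s → ℝ → ℂ) (hγ : ∀ j, Continuous (γ j))
    (p : ℂ × ℂ → ℂ)
    (hp0 : ∀ u : ℂ, p (u, 0) = u ^ s)
    (hp : ∀ u v : ℂ, v ≠ 0 →
      p (u, v) = ∏ j, (u - (‖v‖ ^ c : ℝ) • γ j (Complex.arg v))) :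
    (∀ u₀ : ℂ,
      HasFDerivAt p (((s : ℂ) * u₀ ^ (s - 1)) • ContinuousLinearMap.fst ℝ ℂ ℂ) (u₀, 0)) ∧
    (2 ≤ s → fderiv ℝ p (0, 0) = 0) := by
  have hc0 : c ≠ 0 := by positivity
  have hp_eq : p = fun x => ∏ j, (x.1 - (‖x.2‖ ^ c : ℝ) • γ j (Complex.arg x.2)) := by
    ext1 ⟨u, v⟩
    rcases eq_or_ne v 0 with rfl | hv
    · simp [hp0, Real.zero_rpow hc0]
    · exact hp u v hv
  have hderiv : ∀ u₀ : ℂ,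
      HasFDerivAt p (((s : ℂ) * u₀ ^ (s - 1)) • ContinuousLinearMap.fst ℝ ℂ ℂ) (u₀, 0) := by
    intro u₀
    rw [hp_eq]
    simpa using hasFDerivAt_prod_fst_sub (fun j => by simp [Real.zero_rpow hc0])
      (fun j => (exists_norm_comp_arg_le (hγ j)).elim fun _ hB =>
        hasFDerivAt_norm_rpow_smul_of_bounded (by linarith) hB) u₀
  refine ⟨hderiv, fun hs => ?_⟩
  rw [(hderiv 0).fderiv, zero_pow (by omega), mul_zero]
  ext <;> simp

/-- at every point `(u₀, 0)` the map `p` has real Fréchet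
derivative `(h, w) ↦ s·u₀^{s−1}·h`; in particular, for `s ≥ 2` the origin is a
singular point of `p : ℝ⁴ → ℝ²`. -/
theorem stmt_6 (s : ℕ) (hs : 1 ≤ s) (c : ℝ) (hc : 2 ≤ c)
    (γ : Fin s → ℝ → ℂ) (hγ : ∀ j, Continuous (γ j))
    (σ : Equiv.Perm (Fin s))
    (hσ : ∀ j t, γ j (t + 2 * Real.pi) = γ (σ j) t)
    (p : ℂ × ℂ → ℂ)
    (hp0 : ∀ u : ℂ, p (u, 0) = u ^ s)
    (hp : ∀ u v : ℂ, v ≠ 0 →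
      p (u, v) = ∏ j, (u - (‖v‖ ^ c : ℝ) • γ j (Complex.arg v))) :
    (∀ u₀ : ℂ,
      HasFDerivAt p (((s : ℂ) * u₀ ^ (s - 1)) • ContinuousLinearMap.fst ℝ ℂ ℂ) (u₀, 0)) ∧
    (2 ≤ s → fderiv ℝ p (0, 0) = 0) :=
  stmt_6_general s c hc γ hγ p hp0 hp
end

section
/- Let p : ℂ × ℂ → ℂ and let c, m be real numbers with c > 0 such that p(λ^c • u, λ • v) = λ^m • p(u,v) for all real λ > 0 and all (u,v) ∈ ℂ × ℂ (real powers). Suppose x = (u,v) ≠ (0,0), p(x) = 0, and p is real-differentiable at x. Then the vector w = (c • u, v) satisfies fderiv ℝ p x w = 0 and ⟪x, w⟫ = c·‖u‖² + ‖v‖² > 0. Hence the zero set of p meets the sphere of radius ‖x‖ centred at the origin transversely at x. -/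
open Complex

/-!
Differentiating the weighted homogeneity relation `p (λ^c • u, λ • v) = λ^m • p (u, v)` at
`λ = 1` gives the weighted Euler identity `Dp(u, v) (c • u, v) = m • p (u, v)`. At a zero of `p`
the Euler vector `(c • u, v)` is therefore tangent to the zero set, while its inner product with
the position vector is `c‖u‖² + ‖v‖² > 0`, so it is not tangent to the sphere through `(u, v)`.
-/

section WeightedEuler

variable {E₁ E₂ F : Type*} [NormedAddCommGroup E₁] [NormedSpace ℝ E₁]
  [NormedAddCommGroup E₂] [NormedSpace ℝ E₂] [NormedAddCommGroup F] [NormedSpace ℝ F]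

theorem hasDerivAt_rpow_smul_const_one (c : ℝ) (u : E₁) :
    HasDerivAt (fun t : ℝ => t ^ c • u) (c • u) 1 := by
  simpa using (Real.hasDerivAt_rpow_const (x := 1) (p := c) (Or.inl one_ne_zero)).smul_const u

theorem hasDerivAt_weightedOrbit_one (c : ℝ) (u : E₁) (v : E₂) :
    HasDerivAt (fun t : ℝ => (t ^ c • u, t • v)) (c • u, v) 1 :=
  (hasDerivAt_rpow_smul_const_one c u).prodMk (by simpa using (hasDerivAt_id (1 : ℝ)).smul_const v)

theorem fderiv_apply_weightedEuler {p : E₁ × E₂ → F} {c m : ℝ}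
    (hhom : ∀ lam : ℝ, 0 < lam → ∀ u v, p (lam ^ c • u, lam • v) = lam ^ m • p (u, v))
    {u : E₁} {v : E₂} (hdiff : DifferentiableAt ℝ p (u, v)) :
    fderiv ℝ p (u, v) (c • u, v) = m • p (u, v) := by
  have horbit : HasDerivAt (fun t : ℝ => p (t ^ c • u, t • v)) (fderiv ℝ p (u, v) (c • u, v)) 1 :=
    (by simpa using hdiff.hasFDerivAt : HasFDerivAt p (fderiv ℝ p (u, v))
      ((1 : ℝ) ^ c • u, (1 : ℝ) • v)).comp_hasDerivAt 1 (hasDerivAt_weightedOrbit_one c u v)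
  have hscale : HasDerivAt (fun t : ℝ => t ^ m • p (u, v)) (m • p (u, v)) 1 :=
    hasDerivAt_rpow_smul_const_one m (p (u, v))
  have hagree : (fun t : ℝ => p (t ^ c • u, t • v)) =ᶠ[nhds 1] fun t => t ^ m • p (u, v) := by
    filter_upwards [lt_mem_nhds one_pos] with t ht using hhom t ht u v
  exact horbit.unique (hscale.congr_of_eventuallyEq hagree)

end WeightedEuler

theorem weighted_sq_norm_pos {E₁ E₂ : Type*} [NormedAddCommGroup E₁] [NormedAddCommGroup E₂]
    {c : ℝ} (hc : 0 < c) {u : E₁} {v : E₂} (hne : (u, v) ≠ (0, 0)) :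
    0 < c * ‖u‖ ^ 2 + ‖v‖ ^ 2 := by
  by_cases hu : u = 0
  · have hv : v ≠ 0 := fun hv => hne (by rw [hu, hv])
    simp [hu, hv]
  · linarith [mul_pos hc (pow_pos (norm_pos_iff.mpr hu) 2), sq_nonneg ‖v‖]

theorem realInner4_smul_fst (c : ℝ) (u v : ℂ) :
    realInner4 (u, v) (c • u, v) = c * ‖u‖ ^ 2 + ‖v‖ ^ 2 := by
  simp only [realInner4, Complex.real_smul, map_mul, Complex.conj_ofReal, Complex.mul_conj]
  rw [mul_left_comm, Complex.mul_conj, ← Complex.ofReal_mul, Complex.ofReal_re, Complex.ofReal_re,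
    Complex.normSq_eq_norm_sq, Complex.normSq_eq_norm_sq]

/-- for a weighted homogeneous map `p`, at every nonzero zero
`x = (u,v)` of `p` where `p` is real-differentiable, the vector `w = (c•u, v)`
lies in the kernel of `fderiv ℝ p x` and `⟪x, w⟫ = c·‖u‖² + ‖v‖² > 0`; hence
the zero set of `p` meets the sphere of radius `‖x‖` transversely at `x`. -/
theorem stmt_9 (p : ℂ × ℂ → ℂ) (c m : ℝ) (hc : 0 < c)
    (hhom : ∀ lam : ℝ, 0 < lam → ∀ u v : ℂ,
      p ((lam ^ c : ℝ) • u, lam • v) = (lam ^ m : ℝ) • p (u, v))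
    (u v : ℂ) (hne : (u, v) ≠ (0, 0)) (hzero : p (u, v) = 0)
    (hdiff : DifferentiableAt ℝ p (u, v)) :
    fderiv ℝ p (u, v) (c • u, v) = 0 ∧
    realInner4 (u, v) (c • u, v) = c * ‖u‖ ^ 2 + ‖v‖ ^ 2 ∧
    0 < c * ‖u‖ ^ 2 + ‖v‖ ^ 2 :=
  ⟨by rw [fderiv_apply_weightedEuler hhom hdiff, hzero, smul_zero],
    realInner4_smul_fst c u v, weighted_sq_norm_pos hc hne⟩
end
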